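/- Let ρ ≥ 0, a_max ≥ 0 and 0 < b_min ≤ b_max, and define the RSS safety distance dRSS(v_f, v_r) = max(0, v_r·ρ + (a_max/2)·ρ² + (v_r + a_max·ρ)²/(2·b_min) − v_f²/(2·b_max)). Let y_r, y_f : ℝ → ℝ (positions of the rear and front vehicles) and v_r, v_f : ℝ → ℝ (their velocities) satisfy: for every t ≥ 0, y_r has derivative v_r(t) at t and y_f has derivative v_f(t) at t; v_r and v_f are differentiable on [0,∞) with v_r(t) ≥ 0 and v_f(t) ≥ 0 for all t ≥ 0; v_f′(t) ≥ −b_max for every t ≥ 0 at which v_f(t) > 0 (the front vehicle brakes at most at rate b_max); v_r′(t) ≤ a_max for every t ∈ [0, ρ] and v_r′(t) ≤ −b_min for every t > ρ at which v_r(t) > 0 (the rear vehicle executes the proper response: it accelerates at most at a_max during the response time ρ and then brakes at least at b_min until stopped). If y_f(0) − y_r(0) > dRSS(v_f(0), v_r(0)), then y_r(t) < y_f(t) for every t ≥ 0; i.e., the vehicles never collide. -/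

import Mathlib

/-!
The front vehicle's braking point `y_f + v_f² / (2 b_max)`, where it would stop under its
hardest braking, never decreases. The rear vehicle's worst-case stopping point (accelerate at
`a_max` until time `ρ`, then brake at `b_min`) never increases, and it bounds the rear braking
point `y_r + v_r² / (2 b_min)` from above. The RSS condition says precisely that at time `0` the
rear worst-case stopping point lies strictly behind the front braking point, so this separation
persists. Hence, whenever the two vehicles are level, the front one is strictly faster, and the
gap `y_f - y_r`, positive at time `0`, can never close.
-/

/-- The RSS safety distance. -/
noncomputable def dRSS (ρ a_max b_min b_max v_f v_r : ℝ) : ℝ :=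
  max 0 (v_r * ρ + (a_max / 2) * ρ ^ 2 +
    (v_r + a_max * ρ) ^ 2 / (2 * b_min) - v_f ^ 2 / (2 * b_max))

open Set

noncomputable def brakingPoint (b : ℝ) (y v : ℝ → ℝ) (t : ℝ) : ℝ :=
  y t + v t ^ 2 / (2 * b)

/-- Where a vehicle at `(y t, v t)` stops if it accelerates at rate `a` until time `ρ` and then
brakes at rate `b`. -/
noncomputable def responsePoint (ρ a b : ℝ) (y v : ℝ → ℝ) (t : ℝ) : ℝ :=
  y t + v t * (ρ - t) + a / 2 * (ρ - t) ^ 2 + (v t + a * (ρ - t)) ^ 2 / (2 * b)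

section Kinematics

variable {ρ a b t : ℝ} {y v : ℝ → ℝ}

theorem hasDerivAt_brakingPoint {v' : ℝ} (hb : b ≠ 0) (hy : HasDerivAt y (v t) t)
    (hv : HasDerivAt v v' t) : HasDerivAt (brakingPoint b y v) (v t * (b + v') / b) t := by
  refine (hy.add ((hv.pow 2).div_const (2 * b))).congr_deriv ?_
  field_simp
  ring

theorem hasDerivAt_responsePoint {v' : ℝ} (hb : b ≠ 0) (hy : HasDerivAt y (v t) t)
    (hv : HasDerivAt v v' t) :
    HasDerivAt (responsePoint ρ a b y v) ((v' - a) * (ρ - t + (v t + a * (ρ - t)) / b)) t := by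
  have hgap : HasDerivAt (fun s : ℝ => ρ - s) (-1) t := by
    simpa using (hasDerivAt_id t).const_sub ρ
  refine (((hy.add (hv.mul hgap)).add ((hgap.pow 2).const_mul (a / 2))).add
    (((hv.add (hgap.const_mul a)).pow 2).div_const (2 * b))).congr_deriv ?_
  simp only [Pi.add_apply]
  field_simp
  ring

theorem brakingPoint_le_responsePoint (ha : 0 ≤ a) (hb : 0 < b) (ht : t ≤ ρ) (hv : 0 ≤ v t) :
    brakingPoint b y v t ≤ responsePoint ρ a b y v t := by
  have hgap : 0 ≤ ρ - t := sub_nonneg.2 ht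
  have hsq : v t ^ 2 / (2 * b) ≤ (v t + a * (ρ - t)) ^ 2 / (2 * b) := by
    gcongr
    nlinarith [mul_nonneg ha hgap]
  unfold brakingPoint responsePoint
  nlinarith [mul_nonneg hv hgap, mul_nonneg ha (sq_nonneg (ρ - t))]

theorem responsePoint_self : responsePoint ρ a b y v ρ = brakingPoint b y v ρ := by
  simp [responsePoint, brakingPoint]

variable {D : Set ℝ} {v' : ℝ → ℝ}

theorem monotoneOn_brakingPoint (hb : 0 < b) (hD : Convex ℝ D)
    (hy : ∀ t ∈ D, HasDerivAt y (v t) t) (hv : ∀ t ∈ D, HasDerivAt v (v' t) t)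
    (hv₀ : ∀ t ∈ interior D, 0 ≤ v t) (hbrake : ∀ t ∈ interior D, 0 < v t → -b ≤ v' t) :
    MonotoneOn (brakingPoint b y v) D := by
  have hd : ∀ t ∈ D, HasDerivAt (brakingPoint b y v) (v t * (b + v' t) / b) t :=
    fun t ht => hasDerivAt_brakingPoint hb.ne' (hy t ht) (hv t ht)
  refine monotoneOn_of_hasDerivWithinAt_nonneg hD
    (fun t ht => (hd t ht).continuousAt.continuousWithinAt)
    (fun t ht => (hd t (interior_subset ht)).hasDerivWithinAt) fun t ht => ?_
  rcases (hv₀ t ht).eq_or_lt with hstop | hmove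
  · simp [← hstop]
  · have := hbrake t ht hmove
    exact div_nonneg (mul_nonneg hmove.le (by linarith)) hb.le

theorem antitoneOn_brakingPoint (hb : 0 < b) (hD : Convex ℝ D)
    (hy : ∀ t ∈ D, HasDerivAt y (v t) t) (hv : ∀ t ∈ D, HasDerivAt v (v' t) t)
    (hv₀ : ∀ t ∈ interior D, 0 ≤ v t) (hbrake : ∀ t ∈ interior D, 0 < v t → v' t ≤ -b) :
    AntitoneOn (brakingPoint b y v) D := by
  have hd : ∀ t ∈ D, HasDerivAt (brakingPoint b y v) (v t * (b + v' t) / b) t :=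
    fun t ht => hasDerivAt_brakingPoint hb.ne' (hy t ht) (hv t ht)
  refine antitoneOn_of_hasDerivWithinAt_nonpos hD
    (fun t ht => (hd t ht).continuousAt.continuousWithinAt)
    (fun t ht => (hd t (interior_subset ht)).hasDerivWithinAt) fun t ht => ?_
  rcases (hv₀ t ht).eq_or_lt with hstop | hmove
  · simp [← hstop]
  · have := hbrake t ht hmove
    exact div_nonpos_of_nonpos_of_nonneg
      (mul_nonpos_of_nonneg_of_nonpos hmove.le (by linarith)) hb.le

theorem antitoneOn_responsePoint (ha : 0 ≤ a) (hb : 0 < b) {s : ℝ}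
    (hy : ∀ t ∈ Icc s ρ, HasDerivAt y (v t) t) (hv : ∀ t ∈ Icc s ρ, HasDerivAt v (v' t) t)
    (hv₀ : ∀ t ∈ Ioo s ρ, 0 ≤ v t) (haccel : ∀ t ∈ Ioo s ρ, v' t ≤ a) :
    AntitoneOn (responsePoint ρ a b y v) (Icc s ρ) := by
  have hd : ∀ t ∈ Icc s ρ, HasDerivAt (responsePoint ρ a b y v)
      ((v' t - a) * (ρ - t + (v t + a * (ρ - t)) / b)) t :=
    fun t ht => hasDerivAt_responsePoint hb.ne' (hy t ht) (hv t ht)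
  refine antitoneOn_of_hasDerivWithinAt_nonpos (convex_Icc s ρ)
    (fun t ht => (hd t ht).continuousAt.continuousWithinAt)
    (fun t ht => (hd t (interior_subset ht)).hasDerivWithinAt) fun t ht => ?_
  rw [interior_Icc] at ht
  have hgap : 0 ≤ ρ - t := sub_nonneg.2 ht.2.le
  have hvt := hv₀ t ht
  have haccelt := haccel t ht
  exact mul_nonpos_of_nonpos_of_nonneg (by linarith) (by positivity)

theorem brakingPoint_le_responsePoint_zero (hρ : 0 ≤ ρ) (ha : 0 ≤ a) (hb : 0 < b)
    (hy : ∀ t, 0 ≤ t → HasDerivAt y (v t) t) (hv : ∀ t, 0 ≤ t → HasDerivAt v (v' t) t)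
    (hv₀ : ∀ t, 0 ≤ t → 0 ≤ v t) (haccel : ∀ t, 0 ≤ t → t ≤ ρ → v' t ≤ a)
    (hbrake : ∀ t, ρ < t → 0 < v t → v' t ≤ -b) (ht : 0 ≤ t) :
    brakingPoint b y v t ≤ responsePoint ρ a b y v 0 := by
  have hresponse : AntitoneOn (responsePoint ρ a b y v) (Icc 0 ρ) :=
    antitoneOn_responsePoint ha hb (fun t ht => hy t ht.1) (fun t ht => hv t ht.1)
      (fun t ht => hv₀ t ht.1.le) (fun t ht => haccel t ht.1.le ht.2.le)
  have hzero : (0 : ℝ) ∈ Icc 0 ρ := ⟨le_rfl, hρ⟩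
  rcases le_or_gt t ρ with hresp | hbraking
  · calc brakingPoint b y v t ≤ responsePoint ρ a b y v t :=
          brakingPoint_le_responsePoint ha hb hresp (hv₀ t ht)
      _ ≤ responsePoint ρ a b y v 0 := hresponse hzero ⟨ht, hresp⟩ ht
  · have hbrakingPhase : AntitoneOn (brakingPoint b y v) (Ici ρ) := by
      refine antitoneOn_brakingPoint hb (convex_Ici ρ) (fun t ht => hy t (hρ.trans ht))
        (fun t ht => hv t (hρ.trans ht)) (fun t ht => ?_) (fun t ht => ?_) <;>
        rw [interior_Ici] at ht
      exacts [hv₀ t (hρ.trans ht.le), hbrake t ht]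
    calc brakingPoint b y v t ≤ brakingPoint b y v ρ :=
          hbrakingPhase self_mem_Ici hbraking.le hbraking.le
      _ = responsePoint ρ a b y v ρ := responsePoint_self.symm
      _ ≤ responsePoint ρ a b y v 0 := hresponse hzero ⟨hρ, le_rfl⟩ hρ

end Kinematics

theorem responsePoint_lt_brakingPoint_of_dRSS_lt {ρ a_max b_min b_max : ℝ}
    {y_r y_f v_r v_f : ℝ → ℝ} (h : dRSS ρ a_max b_min b_max (v_f 0) (v_r 0) < y_f 0 - y_r 0) :
    responsePoint ρ a_max b_min y_r v_r 0 < brakingPoint b_max y_f v_f 0 := by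
  have := (le_max_right _ _).trans_lt h
  simp only [responsePoint, brakingPoint, sub_zero]
  linarith

theorem pos_of_hasDerivAt_pos_at_zeros {g g' : ℝ → ℝ} {t₀ : ℝ}
    (hg : ∀ t, t₀ ≤ t → HasDerivAt g (g' t) t) (hg₀ : 0 < g t₀)
    (hzero : ∀ t, t₀ ≤ t → g t = 0 → 0 < g' t) {t : ℝ} (ht : t₀ ≤ t) : 0 < g t := by
  -- Fencing gives `0 ≤ g`; a zero after `t₀` is then a local minimum, where `g'` would vanish.
  have hnonneg : ∀ t, t₀ ≤ t → 0 ≤ g t := by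
    intro t ht
    have := image_le_of_deriv_right_lt_deriv_boundary (f := fun s => -g s) (f' := fun s => -g' s)
      (B := fun _ => 0) (B' := fun _ => 0) (a := t₀) (b := t)
      (fun s hs => (hg s hs.1).neg.continuousAt.continuousWithinAt)
      (fun s hs => (hg s hs.1).neg.hasDerivWithinAt) (by simpa using hg₀.le)
      (fun _ => hasDerivAt_const _ _)
      (fun s hs hs0 => by simpa using hzero s hs.1 (neg_eq_zero.1 hs0)) ⟨ht, le_rfl⟩
    simpa using this
  refine (hnonneg t ht).lt_of_ne' fun hgt => (hzero t ht hgt).ne' ?_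
  have ht₀ : t₀ < t := ht.lt_of_ne (by rintro rfl; exact hg₀.ne' hgt)
  have hmin : IsLocalMin g t := Filter.mem_of_superset (Ioi_mem_nhds ht₀)
    fun s hs => hgt ▸ hnonneg s (le_of_lt hs)
  exact hmin.hasDerivAt_eq_zero (hg t ht)

theorem lt_of_brakingPoint_lt_of_eq {b₁ b₂ t : ℝ} {y₁ y₂ v₁ v₂ : ℝ → ℝ} (hb₁ : 0 < b₁)
    (hb : b₁ ≤ b₂) (hv₂ : 0 ≤ v₂ t) (h : brakingPoint b₁ y₁ v₁ t < brakingPoint b₂ y₂ v₂ t)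
    (hy : y₂ t = y₁ t) : v₁ t < v₂ t := by
  have hb₂ : 0 < 2 * b₂ := by linarith
  have hsq : v₁ t ^ 2 / (2 * b₂) < v₂ t ^ 2 / (2 * b₂) := by
    have : v₁ t ^ 2 / (2 * b₂) ≤ v₁ t ^ 2 / (2 * b₁) := by gcongr
    simp only [brakingPoint, hy] at h
    linarith
  exact lt_of_pow_lt_pow_left₀ 2 hv₂ ((div_lt_div_iff_of_pos_right hb₂).1 hsq)

theorem rss_conditional_safety_one_way_traffic
    (ρ a_max b_min b_max : ℝ)
    (hρ : 0 ≤ ρ) (ha : 0 ≤ a_max) (hbmin : 0 < b_min) (hb : b_min ≤ b_max)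
    (y_r y_f v_r v_f : ℝ → ℝ)
    (hyr : ∀ t : ℝ, 0 ≤ t → HasDerivAt y_r (v_r t) t)
    (hyf : ∀ t : ℝ, 0 ≤ t → HasDerivAt y_f (v_f t) t)
    (hvr_diff : ∀ t : ℝ, 0 ≤ t → DifferentiableAt ℝ v_r t)
    (hvf_diff : ∀ t : ℝ, 0 ≤ t → DifferentiableAt ℝ v_f t)
    (hvr_nonneg : ∀ t : ℝ, 0 ≤ t → 0 ≤ v_r t)
    (hvf_nonneg : ∀ t : ℝ, 0 ≤ t → 0 ≤ v_f t)
    (hvf_brake : ∀ t : ℝ, 0 ≤ t → 0 < v_f t → -b_max ≤ deriv v_f t)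
    (hvr_accel : ∀ t : ℝ, 0 ≤ t → t ≤ ρ → deriv v_r t ≤ a_max)
    (hvr_brake : ∀ t : ℝ, ρ < t → 0 < v_r t → deriv v_r t ≤ -b_min)
    (hinit : y_f 0 - y_r 0 > dRSS ρ a_max b_min b_max (v_f 0) (v_r 0)) :
    ∀ t : ℝ, 0 ≤ t → y_r t < y_f t := by
  have hfront : MonotoneOn (brakingPoint b_max y_f v_f) (Ici 0) := by
    refine monotoneOn_brakingPoint (hbmin.trans_le hb) (convex_Ici 0) hyf
      (fun t ht => (hvf_diff t ht).hasDerivAt) (fun t ht => ?_) (fun t ht => ?_) <;>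
      rw [interior_Ici] at ht
    exacts [hvf_nonneg t ht.le, hvf_brake t ht.le]
  have hseparated : ∀ t, 0 ≤ t → brakingPoint b_min y_r v_r t < brakingPoint b_max y_f v_f t :=
    fun t ht => calc
      brakingPoint b_min y_r v_r t ≤ responsePoint ρ a_max b_min y_r v_r 0 :=
        brakingPoint_le_responsePoint_zero hρ ha hbmin hyr
          (fun t ht => (hvr_diff t ht).hasDerivAt) hvr_nonneg hvr_accel hvr_brake ht
      _ < brakingPoint b_max y_f v_f 0 := responsePoint_lt_brakingPoint_of_dRSS_lt hinit
      _ ≤ brakingPoint b_max y_f v_f t := hfront self_mem_Ici ht ht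
  have hgap₀ : 0 < y_f 0 - y_r 0 := (le_max_left _ _).trans_lt hinit
  intro t ht
  exact sub_pos.1 <| pos_of_hasDerivAt_pos_at_zeros (fun t ht => (hyf t ht).sub (hyr t ht))
    hgap₀ (fun t ht hcontact => sub_pos.2 <| lt_of_brakingPoint_lt_of_eq hbmin hb
      (hvf_nonneg t ht) (hseparated t ht) (sub_eq_zero.1 hcontact)) ht
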